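/- In the three-gambler ruin game with total capital K, probabilities p₁,p₂,p₃ ∈ (0,1), and any stationary strategy profile x with values in [0,1], the limit lim_{t→∞} Pᵗ of the powers of the transition matrix P exists (entrywise). -/
import Mathlib


open Filter Topology Matrix

/-- The state set of the three-gambler ruin game with total capital `K`. -/
abbrev GState (K : ℕ) : Type := {s : ℕ × ℕ × ℕ // s.1 + s.2.1 + s.2.2 = K}

instance GState.finite (K : ℕ) : Finite (GState K) := by
  apply Finite.of_injective
    (fun s : GState K =>
      ((⟨s.val.1, by have := s.2; omega⟩ : Fin (K + 1)),
       (⟨s.val.2.1, by have := s.2; omega⟩ : Fin (K + 1)),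
       (⟨s.val.2.2, by have := s.2; omega⟩ : Fin (K + 1))))
  intro a b h
  simp only [Prod.mk.injEq, Fin.mk.injEq] at h
  apply Subtype.ext
  exact Prod.ext h.1 (Prod.ext h.2.1 h.2.2)

noncomputable instance GState.fintype (K : ℕ) : Fintype (GState K) :=
  Fintype.ofFinite _

/-- A state is terminal iff two of its coordinates vanish (i.e. it is one of
`(K,0,0)`, `(0,K,0)`, `(0,0,K)`). -/
def GState.terminal {K : ℕ} (s : GState K) : Prop :=
  (s.val.2.1 = 0 ∧ s.val.2.2 = 0) ∨ (s.val.1 = 0 ∧ s.val.2.2 = 0) ∨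
    (s.val.1 = 0 ∧ s.val.2.1 = 0)

instance {K : ℕ} (s : GState K) : Decidable s.terminal := by
  unfold GState.terminal; infer_instance

/-- The transition matrix of the three-gambler ruin game with total capital `K`,
winning probabilities `p₁, p₂, p₃`, and stationary strategy profile
`(x₁, x₂, x₃)` (defined on interior states). -/
noncomputable def gTrans (K : ℕ) (p₁ p₂ p₃ : ℝ) (x₁ x₂ x₃ : ℕ × ℕ × ℕ → ℝ) :
    Matrix (GState K) (GState K) ℝ := fun s s' =>
  let a := s.val.1
  let b := s.val.2.1
  let c := s.val.2.2
  if s.terminal then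
    -- terminal states are absorbing
    (if s' = s then 1 else 0)
  else if c = 0 then
    -- boundary state (a, b, 0) with a, b > 0 : P₁ and P₂ play each other
    (if s'.val = (a + 1, b - 1, 0) then p₁
     else if s'.val = (a - 1, b + 1, 0) then 1 - p₁ else 0)
  else if a = 0 then
    -- boundary state (0, b, c) with b, c > 0 : P₂ and P₃ play each other
    (if s'.val = (0, b + 1, c - 1) then p₂
     else if s'.val = (0, b - 1, c + 1) then 1 - p₂ else 0)
  else if b = 0 then
    -- boundary state (a, 0, c) with a, c > 0 : P₃ and P₁ play each other
    (if s'.val = (a - 1, 0, c + 1) then p₃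
     else if s'.val = (a + 1, 0, c - 1) then 1 - p₃ else 0)
  else
    -- interior state
    (if s'.val = (a + 1, b - 1, c) then (x₁ s.val + 1 - x₂ s.val) * p₁ / 3
     else if s'.val = (a - 1, b + 1, c) then (x₁ s.val + 1 - x₂ s.val) * (1 - p₁) / 3
     else if s'.val = (a, b + 1, c - 1) then (x₂ s.val + 1 - x₃ s.val) * p₂ / 3
     else if s'.val = (a, b - 1, c + 1) then (x₂ s.val + 1 - x₃ s.val) * (1 - p₂) / 3
     else if s'.val = (a - 1, b, c + 1) then (x₃ s.val + 1 - x₁ s.val) * p₃ / 3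
     else if s'.val = (a + 1, b, c - 1) then (x₃ s.val + 1 - x₁ s.val) * (1 - p₃) / 3
     else 0)


section Aux

variable {K : ℕ}

lemma gsum_peel (t : ℕ × ℕ × ℕ) (ht : t.1 + t.2.1 + t.2.2 = K) (v : ℝ)
    (g : GState K → ℝ) :
    ∑ s' : GState K, (if s'.val = t then v else g s') =
      v - g ⟨t, ht⟩ + ∑ s' : GState K, g s' := by
  have h : ∀ s' : GState K, (if s'.val = t then v else g s')
      = (if s' = ⟨t, ht⟩ then v - g s' else 0) + g s' := by
    intro s'
    by_cases hs : s' = ⟨t, ht⟩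
    · subst hs; rw [if_pos rfl, if_pos rfl]; ring
    · have hv : s'.val ≠ t := fun hv => hs (Subtype.ext hv)
      rw [if_neg hv, if_neg hs, zero_add]
  rw [Finset.sum_congr rfl fun s' _ => h s', Finset.sum_add_distrib,
    Finset.sum_ite_eq' Finset.univ (⟨t, ht⟩ : GState K), if_pos (Finset.mem_univ _)]

variable (K) (p₁ p₂ p₃ : ℝ) (x₁ x₂ x₃ : ℕ × ℕ × ℕ → ℝ)

lemma gTrans_term (s s' : GState K) (h : s.terminal) :
    gTrans K p₁ p₂ p₃ x₁ x₂ x₃ s s' = if s' = s then 1 else 0 := by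
  simp only [gTrans]; rw [if_pos h]

lemma gTrans_b12 (s s' : GState K) (h : ¬ s.terminal) (hc : s.val.2.2 = 0) :
    gTrans K p₁ p₂ p₃ x₁ x₂ x₃ s s' =
      (if s'.val = (s.val.1 + 1, s.val.2.1 - 1, 0) then p₁
       else if s'.val = (s.val.1 - 1, s.val.2.1 + 1, 0) then 1 - p₁ else 0) := by
  simp only [gTrans]; rw [if_neg h, if_pos hc]

lemma gTrans_b23 (s s' : GState K) (h : ¬ s.terminal) (hc : s.val.2.2 ≠ 0)
    (ha : s.val.1 = 0) :
    gTrans K p₁ p₂ p₃ x₁ x₂ x₃ s s' =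
      (if s'.val = (0, s.val.2.1 + 1, s.val.2.2 - 1) then p₂
       else if s'.val = (0, s.val.2.1 - 1, s.val.2.2 + 1) then 1 - p₂ else 0) := by
  simp only [gTrans]; rw [if_neg h, if_neg hc, if_pos ha]

lemma gTrans_b31 (s s' : GState K) (h : ¬ s.terminal) (hc : s.val.2.2 ≠ 0)
    (ha : s.val.1 ≠ 0) (hb : s.val.2.1 = 0) :
    gTrans K p₁ p₂ p₃ x₁ x₂ x₃ s s' =
      (if s'.val = (s.val.1 - 1, 0, s.val.2.2 + 1) then p₃
       else if s'.val = (s.val.1 + 1, 0, s.val.2.2 - 1) then 1 - p₃ else 0) := by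
  simp only [gTrans]; rw [if_neg h, if_neg hc, if_neg ha, if_pos hb]

lemma gTrans_int (s s' : GState K) (h : ¬ s.terminal) (hc : s.val.2.2 ≠ 0)
    (ha : s.val.1 ≠ 0) (hb : s.val.2.1 ≠ 0) :
    gTrans K p₁ p₂ p₃ x₁ x₂ x₃ s s' =
      (if s'.val = (s.val.1 + 1, s.val.2.1 - 1, s.val.2.2) then
        (x₁ s.val + 1 - x₂ s.val) * p₁ / 3
       else if s'.val = (s.val.1 - 1, s.val.2.1 + 1, s.val.2.2) then
        (x₁ s.val + 1 - x₂ s.val) * (1 - p₁) / 3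
       else if s'.val = (s.val.1, s.val.2.1 + 1, s.val.2.2 - 1) then
        (x₂ s.val + 1 - x₃ s.val) * p₂ / 3
       else if s'.val = (s.val.1, s.val.2.1 - 1, s.val.2.2 + 1) then
        (x₂ s.val + 1 - x₃ s.val) * (1 - p₂) / 3
       else if s'.val = (s.val.1 - 1, s.val.2.1, s.val.2.2 + 1) then
        (x₃ s.val + 1 - x₁ s.val) * p₃ / 3
       else if s'.val = (s.val.1 + 1, s.val.2.1, s.val.2.2 - 1) then
        (x₃ s.val + 1 - x₁ s.val) * (1 - p₃) / 3
       else 0) := by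
  simp only [gTrans]; rw [if_neg h, if_neg hc, if_neg ha, if_neg hb]

lemma gTrans_nonneg (hp₁ : p₁ ∈ Set.Ioo (0:ℝ) 1) (hp₂ : p₂ ∈ Set.Ioo (0:ℝ) 1)
    (hp₃ : p₃ ∈ Set.Ioo (0:ℝ) 1)
    (hx : ∀ s : ℕ × ℕ × ℕ, 0 < s.1 → 0 < s.2.1 → 0 < s.2.2 →
      x₁ s ∈ Set.Icc (0:ℝ) 1 ∧ x₂ s ∈ Set.Icc (0:ℝ) 1 ∧ x₃ s ∈ Set.Icc (0:ℝ) 1)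
    (s s' : GState K) : 0 ≤ gTrans K p₁ p₂ p₃ x₁ x₂ x₃ s s' := by
  obtain ⟨hp₁0, hp₁1⟩ := hp₁
  obtain ⟨hp₂0, hp₂1⟩ := hp₂
  obtain ⟨hp₃0, hp₃1⟩ := hp₃
  by_cases h : s.terminal
  · rw [gTrans_term K p₁ p₂ p₃ x₁ x₂ x₃ s s' h]; split_ifs <;> norm_num
  by_cases hc : s.val.2.2 = 0
  · rw [gTrans_b12 K p₁ p₂ p₃ x₁ x₂ x₃ s s' h hc]; split_ifs <;> linarith
  by_cases ha : s.val.1 = 0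
  · rw [gTrans_b23 K p₁ p₂ p₃ x₁ x₂ x₃ s s' h hc ha]; split_ifs <;> linarith
  by_cases hb : s.val.2.1 = 0
  · rw [gTrans_b31 K p₁ p₂ p₃ x₁ x₂ x₃ s s' h hc ha hb]; split_ifs <;> linarith
  · rw [gTrans_int K p₁ p₂ p₃ x₁ x₂ x₃ s s' h hc ha hb]
    obtain ⟨⟨u1, v1⟩, ⟨u2, v2⟩, ⟨u3, v3⟩⟩ :=
      hx s.val (Nat.pos_of_ne_zero ha) (Nat.pos_of_ne_zero hb) (Nat.pos_of_ne_zero hc)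
    split_ifs <;> nlinarith

lemma gState_val_mk (t : ℕ × ℕ × ℕ) (ht : t.1 + t.2.1 + t.2.2 = K) :
    (⟨t, ht⟩ : GState K).val = t := rfl

lemma gTrans_row_sum (s : GState K) :
    ∑ s' : GState K, gTrans K p₁ p₂ p₃ x₁ x₂ x₃ s s' = 1 := by
  have hs := s.2
  by_cases h : s.terminal
  · rw [Finset.sum_congr rfl fun s' _ => gTrans_term K p₁ p₂ p₃ x₁ x₂ x₃ s s' h,
      Finset.sum_ite_eq' Finset.univ s (fun _ => (1:ℝ)), if_pos (Finset.mem_univ s)]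
  by_cases hc : s.val.2.2 = 0
  · have hab : s.val.1 ≠ 0 ∧ s.val.2.1 ≠ 0 := by unfold GState.terminal at h; omega
    rw [Finset.sum_congr rfl fun s' _ => gTrans_b12 K p₁ p₂ p₃ x₁ x₂ x₃ s s' h hc]
    have d : ((s.val.1 + 1, s.val.2.1 - 1, (0:ℕ)) : ℕ × ℕ × ℕ) ≠ (s.val.1 - 1, s.val.2.1 + 1, 0) := by
      simp only [ne_eq, Prod.mk.injEq, not_and]; omega
    rw [gsum_peel (s.val.1 + 1, s.val.2.1 - 1, 0) (by show (s.val.1 + 1) + (s.val.2.1 - 1) + (0) = K; omega) _ _,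
      gsum_peel (s.val.1 - 1, s.val.2.1 + 1, 0) (by show (s.val.1 - 1) + (s.val.2.1 + 1) + (0) = K; omega) _ _]
    simp only [gState_val_mk, d, if_false, Finset.sum_const_zero]
    ring
  by_cases ha : s.val.1 = 0
  · have hb : s.val.2.1 ≠ 0 := by unfold GState.terminal at h; omega
    rw [Finset.sum_congr rfl fun s' _ => gTrans_b23 K p₁ p₂ p₃ x₁ x₂ x₃ s s' h hc ha]
    have d : (((0:ℕ), s.val.2.1 + 1, s.val.2.2 - 1) : ℕ × ℕ × ℕ) ≠ (0, s.val.2.1 - 1, s.val.2.2 + 1) := by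
      simp only [ne_eq, Prod.mk.injEq, not_and]; omega
    rw [gsum_peel (0, s.val.2.1 + 1, s.val.2.2 - 1) (by show (0) + (s.val.2.1 + 1) + (s.val.2.2 - 1) = K; omega) _ _,
      gsum_peel (0, s.val.2.1 - 1, s.val.2.2 + 1) (by show (0) + (s.val.2.1 - 1) + (s.val.2.2 + 1) = K; omega) _ _]
    simp only [gState_val_mk, d, if_false, Finset.sum_const_zero]
    ring
  by_cases hb : s.val.2.1 = 0
  · rw [Finset.sum_congr rfl fun s' _ => gTrans_b31 K p₁ p₂ p₃ x₁ x₂ x₃ s s' h hc ha hb]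
    have d : ((s.val.1 - 1, (0:ℕ), s.val.2.2 + 1) : ℕ × ℕ × ℕ) ≠ (s.val.1 + 1, 0, s.val.2.2 - 1) := by
      simp only [ne_eq, Prod.mk.injEq, not_and]; omega
    rw [gsum_peel (s.val.1 - 1, 0, s.val.2.2 + 1) (by show (s.val.1 - 1) + (0) + (s.val.2.2 + 1) = K; omega) _ _,
      gsum_peel (s.val.1 + 1, 0, s.val.2.2 - 1) (by show (s.val.1 + 1) + (0) + (s.val.2.2 - 1) = K; omega) _ _]
    simp only [gState_val_mk, d, if_false, Finset.sum_const_zero]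
    ring
  · have ha1 : 1 ≤ s.val.1 := Nat.one_le_iff_ne_zero.2 ha
    have hb1 : 1 ≤ s.val.2.1 := Nat.one_le_iff_ne_zero.2 hb
    have hc1 : 1 ≤ s.val.2.2 := Nat.one_le_iff_ne_zero.2 hc
    rw [Finset.sum_congr rfl fun s' _ => gTrans_int K p₁ p₂ p₃ x₁ x₂ x₃ s s' h hc ha hb]
    have d12 : (((s.val.1 + 1, s.val.2.1 - 1, s.val.2.2) : ℕ × ℕ × ℕ)) ≠ (s.val.1 - 1, s.val.2.1 + 1, s.val.2.2) := by
      simp only [ne_eq, Prod.mk.injEq, not_and]; omega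
    have d13 : (((s.val.1 + 1, s.val.2.1 - 1, s.val.2.2) : ℕ × ℕ × ℕ)) ≠ (s.val.1, s.val.2.1 + 1, s.val.2.2 - 1) := by
      simp only [ne_eq, Prod.mk.injEq, not_and]; omega
    have d14 : (((s.val.1 + 1, s.val.2.1 - 1, s.val.2.2) : ℕ × ℕ × ℕ)) ≠ (s.val.1, s.val.2.1 - 1, s.val.2.2 + 1) := by
      simp only [ne_eq, Prod.mk.injEq, not_and]; omega
    have d15 : (((s.val.1 + 1, s.val.2.1 - 1, s.val.2.2) : ℕ × ℕ × ℕ)) ≠ (s.val.1 - 1, s.val.2.1, s.val.2.2 + 1) := by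
      simp only [ne_eq, Prod.mk.injEq, not_and]; omega
    have d16 : (((s.val.1 + 1, s.val.2.1 - 1, s.val.2.2) : ℕ × ℕ × ℕ)) ≠ (s.val.1 + 1, s.val.2.1, s.val.2.2 - 1) := by
      simp only [ne_eq, Prod.mk.injEq, not_and]; omega
    have d23 : (((s.val.1 - 1, s.val.2.1 + 1, s.val.2.2) : ℕ × ℕ × ℕ)) ≠ (s.val.1, s.val.2.1 + 1, s.val.2.2 - 1) := by
      simp only [ne_eq, Prod.mk.injEq, not_and]; omega
    have d24 : (((s.val.1 - 1, s.val.2.1 + 1, s.val.2.2) : ℕ × ℕ × ℕ)) ≠ (s.val.1, s.val.2.1 - 1, s.val.2.2 + 1) := by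
      simp only [ne_eq, Prod.mk.injEq, not_and]; omega
    have d25 : (((s.val.1 - 1, s.val.2.1 + 1, s.val.2.2) : ℕ × ℕ × ℕ)) ≠ (s.val.1 - 1, s.val.2.1, s.val.2.2 + 1) := by
      simp only [ne_eq, Prod.mk.injEq, not_and]; omega
    have d26 : (((s.val.1 - 1, s.val.2.1 + 1, s.val.2.2) : ℕ × ℕ × ℕ)) ≠ (s.val.1 + 1, s.val.2.1, s.val.2.2 - 1) := by
      simp only [ne_eq, Prod.mk.injEq, not_and]; omega
    have d34 : (((s.val.1, s.val.2.1 + 1, s.val.2.2 - 1) : ℕ × ℕ × ℕ)) ≠ (s.val.1, s.val.2.1 - 1, s.val.2.2 + 1) := by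
      simp only [ne_eq, Prod.mk.injEq, not_and]; omega
    have d35 : (((s.val.1, s.val.2.1 + 1, s.val.2.2 - 1) : ℕ × ℕ × ℕ)) ≠ (s.val.1 - 1, s.val.2.1, s.val.2.2 + 1) := by
      simp only [ne_eq, Prod.mk.injEq, not_and]; omega
    have d36 : (((s.val.1, s.val.2.1 + 1, s.val.2.2 - 1) : ℕ × ℕ × ℕ)) ≠ (s.val.1 + 1, s.val.2.1, s.val.2.2 - 1) := by
      simp only [ne_eq, Prod.mk.injEq, not_and]; omega
    have d45 : (((s.val.1, s.val.2.1 - 1, s.val.2.2 + 1) : ℕ × ℕ × ℕ)) ≠ (s.val.1 - 1, s.val.2.1, s.val.2.2 + 1) := by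
      simp only [ne_eq, Prod.mk.injEq, not_and]; omega
    have d46 : (((s.val.1, s.val.2.1 - 1, s.val.2.2 + 1) : ℕ × ℕ × ℕ)) ≠ (s.val.1 + 1, s.val.2.1, s.val.2.2 - 1) := by
      simp only [ne_eq, Prod.mk.injEq, not_and]; omega
    have d56 : (((s.val.1 - 1, s.val.2.1, s.val.2.2 + 1) : ℕ × ℕ × ℕ)) ≠ (s.val.1 + 1, s.val.2.1, s.val.2.2 - 1) := by
      simp only [ne_eq, Prod.mk.injEq, not_and]; omega
    rw [gsum_peel (s.val.1 + 1, s.val.2.1 - 1, s.val.2.2) (by show (s.val.1 + 1) + (s.val.2.1 - 1) + (s.val.2.2) = K; omega) _ _]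
    rw [gsum_peel (s.val.1 - 1, s.val.2.1 + 1, s.val.2.2) (by show (s.val.1 - 1) + (s.val.2.1 + 1) + (s.val.2.2) = K; omega) _ _]
    rw [gsum_peel (s.val.1, s.val.2.1 + 1, s.val.2.2 - 1) (by show (s.val.1) + (s.val.2.1 + 1) + (s.val.2.2 - 1) = K; omega) _ _]
    rw [gsum_peel (s.val.1, s.val.2.1 - 1, s.val.2.2 + 1) (by show (s.val.1) + (s.val.2.1 - 1) + (s.val.2.2 + 1) = K; omega) _ _]
    rw [gsum_peel (s.val.1 - 1, s.val.2.1, s.val.2.2 + 1) (by show (s.val.1 - 1) + (s.val.2.1) + (s.val.2.2 + 1) = K; omega) _ _]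
    rw [gsum_peel (s.val.1 + 1, s.val.2.1, s.val.2.2 - 1) (by show (s.val.1 + 1) + (s.val.2.1) + (s.val.2.2 - 1) = K; omega) _ _]
    simp only [gState_val_mk, d12, d13, d14, d15, d16, d23, d24, d25, d26, d34, d35, d36, d45, d46, d56, if_false, Finset.sum_const_zero]
    ring

end Aux




section Markov
variable {ι : Type*} [Fintype ι] [DecidableEq ι] (M : Matrix ι ι ℝ)

lemma pow_entry_nonneg (h : ∀ i j, 0 ≤ M i j) (t : ℕ) (i j : ι) :
    0 ≤ (M ^ t) i j := by
  induction t generalizing i j with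
  | zero => rw [pow_zero, Matrix.one_apply]; split_ifs <;> norm_num
  | succ n ih =>
      rw [pow_succ, Matrix.mul_apply]
      exact Finset.sum_nonneg fun k _ => mul_nonneg (ih i k) (h k j)

lemma pow_row_sum (h : ∀ i, ∑ j, M i j = 1) (t : ℕ) (i : ι) :
    ∑ j, (M ^ t) i j = 1 := by
  induction t generalizing i with
  | zero =>
      simp only [pow_zero, Matrix.one_apply]
      rw [Finset.sum_ite_eq Finset.univ i (fun _ => (1:ℝ))]
      simp
  | succ n ih =>
      simp only [pow_succ, Matrix.mul_apply]
      rw [Finset.sum_comm]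
      calc ∑ k, ∑ j, (M ^ n) i k * M k j
          = ∑ k, (M ^ n) i k * ∑ j, M k j := by
            simp [Finset.mul_sum]
        _ = 1 := by simp only [h, mul_one]; exact ih i

lemma pow_absorb (τ : ι) (h : ∀ j, M τ j = if j = τ then 1 else 0) (t : ℕ) (j : ι) :
    (M ^ t) τ j = if j = τ then 1 else 0 := by
  induction t generalizing j with
  | zero =>
      rw [pow_zero, Matrix.one_apply]
      by_cases hj : j = τ
      · subst hj; simp
      · rw [if_neg fun hh => hj hh.symm, if_neg hj]
  | succ n ih =>
      rw [pow_succ', Matrix.mul_apply]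
      have : ∀ k, M τ k * (M ^ n) k j = if k = τ then (M ^ n) k j else 0 := by
        intro k; rw [h k]; split_ifs <;> ring
      rw [Finset.sum_congr rfl fun k _ => this k,
        Finset.sum_ite_eq' Finset.univ τ (fun k => (M ^ n) k j),
        if_pos (Finset.mem_univ τ), ih j]

lemma pow_entry_le_one (h : ∀ i j, 0 ≤ M i j) (h1 : ∀ i, ∑ j, M i j = 1)
    (t : ℕ) (i j : ι) : (M ^ t) i j ≤ 1 := by
  rw [← pow_row_sum M h1 t i]
  exact Finset.single_le_sum (fun k _ => pow_entry_nonneg M h t i k) (Finset.mem_univ j)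

lemma pow_absorb_mono (h : ∀ i j, 0 ≤ M i j) (τ : ι) (hτ : M τ τ = 1) (t : ℕ) (i : ι) :
    (M ^ t) i τ ≤ (M ^ (t + 1)) i τ := by
  rw [pow_succ, Matrix.mul_apply]
  have : (M ^ t) i τ = (M ^ t) i τ * M τ τ := by rw [hτ, mul_one]
  rw [this]
  exact Finset.single_le_sum
    (fun k _ => mul_nonneg (pow_entry_nonneg M h t i k) (h k τ)) (Finset.mem_univ τ)

lemma step_pos (h : ∀ i j, 0 ≤ M i j) {i j : ι} (hij : 0 < M i j) {t : ℕ}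
    {f : ι → ℝ} (hf : ∀ k, 0 ≤ f k) (hj : 0 < ∑ k, (M ^ t) j k * f k) :
    0 < ∑ k, (M ^ (t + 1)) i k * f k := by
  have key : ∑ k, (M ^ (t + 1)) i k * f k = ∑ l, M i l * ∑ k, (M ^ t) l k * f k := by
    simp only [pow_succ', Matrix.mul_apply, Finset.sum_mul, Finset.mul_sum]
    rw [Finset.sum_comm]
    apply Finset.sum_congr rfl; intro l _
    apply Finset.sum_congr rfl; intro k _
    ring
  rw [key]
  have : 0 < M i j * ∑ k, (M ^ t) j k * f k := mul_pos hij hj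
  calc (0:ℝ) < M i j * ∑ k, (M ^ t) j k * f k := this
    _ ≤ ∑ l, M i l * ∑ k, (M ^ t) l k * f k := by
        apply Finset.single_le_sum (f := fun l => M i l * ∑ k, (M ^ t) l k * f k)
          (fun l _ => mul_nonneg (h i l)
            (Finset.sum_nonneg fun k _ => mul_nonneg (pow_entry_nonneg M h t l k) (hf k)))
          (Finset.mem_univ j)

end Markov

def gmu (K : ℕ) (s : GState K) : ℕ :=
  if s.terminal then 0
  else if s.val.2.2 = 0 then s.val.2.1
  else if s.val.1 = 0 then s.val.2.2
  else if s.val.2.1 = 0 then s.val.1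
  else s.val.1 * s.val.2.1 * s.val.2.2 * (K + 1) + K

lemma gstep (K : ℕ) (p₁ p₂ p₃ : ℝ) (x₁ x₂ x₃ : ℕ × ℕ × ℕ → ℝ)
    (hp₁ : p₁ ∈ Set.Ioo (0:ℝ) 1) (hp₂ : p₂ ∈ Set.Ioo (0:ℝ) 1)
    (hp₃ : p₃ ∈ Set.Ioo (0:ℝ) 1)
    (s : GState K) (hterm0 : ¬ s.terminal) :
    ∃ s' : GState K, 0 < gTrans K p₁ p₂ p₃ x₁ x₂ x₃ s s' ∧ gmu K s' < gmu K s := by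
  obtain ⟨hp₁0, hp₁1⟩ := hp₁
  obtain ⟨hp₂0, hp₂1⟩ := hp₂
  obtain ⟨hp₃0, hp₃1⟩ := hp₃
  obtain ⟨⟨a, b, c⟩, hs⟩ := s
  have hsum : a + b + c = K := hs
  have hterm : ¬ GState.terminal (⟨(a, b, c), hs⟩ : GState K) := hterm0
  have hterm' : ¬ ((b = 0 ∧ c = 0) ∨ (a = 0 ∧ c = 0) ∨ (a = 0 ∧ b = 0)) := hterm0
  by_cases hc : c = 0
  · refine ⟨⟨(a + 1, b - 1, 0), by show a + 1 + (b - 1) + 0 = K; omega⟩, ?_, ?_⟩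
    · rw [gTrans_b12 K p₁ p₂ p₃ x₁ x₂ x₃ _ _ hterm hc]
      simp only [gState_val_mk, if_true]
      linarith
    · have hmu_s : gmu K ⟨(a, b, c), hs⟩ = b := by
        simp only [gmu, gState_val_mk]
        rw [if_neg hterm, if_pos hc]
      have hmu_t : gmu K ⟨(a + 1, b - 1, 0), by show a + 1 + (b - 1) + 0 = K; omega⟩ ≤ b - 1 := by
        simp only [gmu, GState.terminal, gState_val_mk, mul_zero, zero_mul, true_and, and_true, if_true]
        split_ifs <;> omega
      omega
  by_cases ha : a = 0
  · refine ⟨⟨(0, b + 1, c - 1), by show 0 + (b + 1) + (c - 1) = K; omega⟩, ?_, ?_⟩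
    · rw [gTrans_b23 K p₁ p₂ p₃ x₁ x₂ x₃ _ _ hterm hc ha]
      simp only [gState_val_mk, if_true]
      linarith
    · have hmu_s : gmu K ⟨(a, b, c), hs⟩ = c := by
        simp only [gmu, gState_val_mk]
        rw [if_neg hterm, if_neg hc, if_pos ha]
      have hmu_t : gmu K ⟨(0, b + 1, c - 1), by show 0 + (b + 1) + (c - 1) = K; omega⟩ ≤ c - 1 := by
        simp only [gmu, GState.terminal, gState_val_mk, mul_zero, zero_mul, true_and, and_true, if_true]
        split_ifs <;> omega
      omega
  by_cases hb : b = 0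
  · refine ⟨⟨(a - 1, 0, c + 1), by show a - 1 + 0 + (c + 1) = K; omega⟩, ?_, ?_⟩
    · rw [gTrans_b31 K p₁ p₂ p₃ x₁ x₂ x₃ _ _ hterm hc ha hb]
      simp only [gState_val_mk, if_true]
      linarith
    · have hmu_s : gmu K ⟨(a, b, c), hs⟩ = a := by
        simp only [gmu, gState_val_mk]
        rw [if_neg hterm, if_neg hc, if_neg ha, if_pos hb]
      have hmu_t : gmu K ⟨(a - 1, 0, c + 1), by show a - 1 + 0 + (c + 1) = K; omega⟩ ≤ a - 1 := by
        simp only [gmu, GState.terminal, gState_val_mk, mul_zero, zero_mul, true_and, and_true, if_true]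
        split_ifs <;> omega
      omega
  have e_sum : (x₁ (a, b, c) + 1 - x₂ (a, b, c)) + (x₂ (a, b, c) + 1 - x₃ (a, b, c))
      + (x₃ (a, b, c) + 1 - x₁ (a, b, c)) = 3 := by ring
  by_cases he1 : 0 < x₁ (a, b, c) + 1 - x₂ (a, b, c)
  · have he := he1
    by_cases hab : a ≤ b
    · refine ⟨⟨(a - 1, b + 1, c), by show a - 1 + (b + 1) + c = K; omega⟩, ?_, ?_⟩
      · rw [gTrans_int K p₁ p₂ p₃ x₁ x₂ x₃ _ _ hterm hc ha hb]
        simp only [gState_val_mk, if_true]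
        rw [if_neg (by simp only [Prod.mk.injEq, not_and]; omega)]
        apply div_pos (mul_pos he (by linarith)) (by norm_num)
      · have hprod : (a - 1) * (b + 1) * c < a * b * c := by
          obtain ⟨a', rfl⟩ : ∃ a', a = a' + 1 := ⟨a - 1, by omega⟩
          simp only [Nat.add_sub_cancel]
          calc a' * (b + 1) * c = a' * b * c + a' * c := by ring
            _ < a' * b * c + b * c := by
                have h1 : a' * c < b * c := Nat.mul_lt_mul_of_lt_of_le (by omega) le_rfl (by omega)
                omega
            _ = (a' + 1) * b * c := by ring
        obtain ⟨X, hX⟩ : ∃ X, (a - 1) * (b + 1) * c * (K + 1) = X := ⟨_, rfl⟩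
        obtain ⟨Y, hY⟩ : ∃ Y, a * b * c * (K + 1) = Y := ⟨_, rfl⟩
        have hXY : X < Y := by
          rw [← hX, ← hY]; exact Nat.mul_lt_mul_of_lt_of_le hprod le_rfl (by omega)
        have hmu_s : gmu K ⟨(a, b, c), hs⟩ = Y + K := by
          simp only [gmu, gState_val_mk]
          rw [if_neg hterm, if_neg hc, if_neg ha, if_neg hb, hY]
        have hmu_t : gmu K ⟨(a - 1, b + 1, c), by show a - 1 + (b + 1) + c = K; omega⟩ ≤ X + K := by
          simp only [gmu, GState.terminal, gState_val_mk, mul_zero, zero_mul, true_and, and_true, if_true]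
          rw [hX]
          split_ifs <;> omega
        omega
    · refine ⟨⟨(a + 1, b - 1, c), by show a + 1 + (b - 1) + c = K; omega⟩, ?_, ?_⟩
      · rw [gTrans_int K p₁ p₂ p₃ x₁ x₂ x₃ _ _ hterm hc ha hb]
        simp only [gState_val_mk, if_true]
        apply div_pos (mul_pos he (by linarith)) (by norm_num)
      · have hprod : (a + 1) * (b - 1) * c < a * b * c := by
          obtain ⟨b', rfl⟩ : ∃ b', b = b' + 1 := ⟨b - 1, by omega⟩
          simp only [Nat.add_sub_cancel]
          calc (a + 1) * b' * c = a * b' * c + b' * c := by ring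
            _ < a * b' * c + a * c := by
                have h1 : b' * c < a * c := Nat.mul_lt_mul_of_lt_of_le (by omega) le_rfl (by omega)
                omega
            _ = a * (b' + 1) * c := by ring
        obtain ⟨X, hX⟩ : ∃ X, (a + 1) * (b - 1) * c * (K + 1) = X := ⟨_, rfl⟩
        obtain ⟨Y, hY⟩ : ∃ Y, a * b * c * (K + 1) = Y := ⟨_, rfl⟩
        have hXY : X < Y := by
          rw [← hX, ← hY]; exact Nat.mul_lt_mul_of_lt_of_le hprod le_rfl (by omega)
        have hmu_s : gmu K ⟨(a, b, c), hs⟩ = Y + K := by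
          simp only [gmu, gState_val_mk]
          rw [if_neg hterm, if_neg hc, if_neg ha, if_neg hb, hY]
        have hmu_t : gmu K ⟨(a + 1, b - 1, c), by show a + 1 + (b - 1) + c = K; omega⟩ ≤ X + K := by
          simp only [gmu, GState.terminal, gState_val_mk, mul_zero, zero_mul, true_and, and_true, if_true]
          rw [hX]
          split_ifs <;> omega
        omega
  by_cases he2 : 0 < x₂ (a, b, c) + 1 - x₃ (a, b, c)
  · have he := he2
    by_cases hbc : b ≤ c
    · refine ⟨⟨(a, b - 1, c + 1), by show a + (b - 1) + (c + 1) = K; omega⟩, ?_, ?_⟩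
      · rw [gTrans_int K p₁ p₂ p₃ x₁ x₂ x₃ _ _ hterm hc ha hb]
        simp only [gState_val_mk, if_true]
        rw [if_neg (by simp only [Prod.mk.injEq, not_and]; omega)]
        rw [if_neg (by simp only [Prod.mk.injEq, not_and]; omega)]
        rw [if_neg (by simp only [Prod.mk.injEq, not_and]; omega)]
        apply div_pos (mul_pos he (by linarith)) (by norm_num)
      · have hprod : a * (b - 1) * (c + 1) < a * b * c := by
          obtain ⟨b', rfl⟩ : ∃ b', b = b' + 1 := ⟨b - 1, by omega⟩
          simp only [Nat.add_sub_cancel]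
          calc a * b' * (c + 1) = a * b' * c + a * b' := by ring
            _ < a * b' * c + a * c := by
                have h1 : a * b' < a * c := Nat.mul_lt_mul_of_le_of_lt le_rfl (by omega) (by omega)
                omega
            _ = a * (b' + 1) * c := by ring
        obtain ⟨X, hX⟩ : ∃ X, a * (b - 1) * (c + 1) * (K + 1) = X := ⟨_, rfl⟩
        obtain ⟨Y, hY⟩ : ∃ Y, a * b * c * (K + 1) = Y := ⟨_, rfl⟩
        have hXY : X < Y := by
          rw [← hX, ← hY]; exact Nat.mul_lt_mul_of_lt_of_le hprod le_rfl (by omega)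
        have hmu_s : gmu K ⟨(a, b, c), hs⟩ = Y + K := by
          simp only [gmu, gState_val_mk]
          rw [if_neg hterm, if_neg hc, if_neg ha, if_neg hb, hY]
        have hmu_t : gmu K ⟨(a, b - 1, c + 1), by show a + (b - 1) + (c + 1) = K; omega⟩ ≤ X + K := by
          simp only [gmu, GState.terminal, gState_val_mk, mul_zero, zero_mul, true_and, and_true, if_true]
          rw [hX]
          split_ifs <;> omega
        omega
    · refine ⟨⟨(a, b + 1, c - 1), by show a + (b + 1) + (c - 1) = K; omega⟩, ?_, ?_⟩
      · rw [gTrans_int K p₁ p₂ p₃ x₁ x₂ x₃ _ _ hterm hc ha hb]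
        simp only [gState_val_mk, if_true]
        rw [if_neg (by simp only [Prod.mk.injEq, not_and]; omega)]
        rw [if_neg (by simp only [Prod.mk.injEq, not_and]; omega)]
        apply div_pos (mul_pos he (by linarith)) (by norm_num)
      · have hprod : a * (b + 1) * (c - 1) < a * b * c := by
          obtain ⟨c', rfl⟩ : ∃ c', c = c' + 1 := ⟨c - 1, by omega⟩
          simp only [Nat.add_sub_cancel]
          calc a * (b + 1) * c' = a * b * c' + a * c' := by ring
            _ < a * b * c' + a * b := by
                have h1 : a * c' < a * b := Nat.mul_lt_mul_of_le_of_lt le_rfl (by omega) (by omega)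
                omega
            _ = a * b * (c' + 1) := by ring
        obtain ⟨X, hX⟩ : ∃ X, a * (b + 1) * (c - 1) * (K + 1) = X := ⟨_, rfl⟩
        obtain ⟨Y, hY⟩ : ∃ Y, a * b * c * (K + 1) = Y := ⟨_, rfl⟩
        have hXY : X < Y := by
          rw [← hX, ← hY]; exact Nat.mul_lt_mul_of_lt_of_le hprod le_rfl (by omega)
        have hmu_s : gmu K ⟨(a, b, c), hs⟩ = Y + K := by
          simp only [gmu, gState_val_mk]
          rw [if_neg hterm, if_neg hc, if_neg ha, if_neg hb, hY]
        have hmu_t : gmu K ⟨(a, b + 1, c - 1), by show a + (b + 1) + (c - 1) = K; omega⟩ ≤ X + K := by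
          simp only [gmu, GState.terminal, gState_val_mk, mul_zero, zero_mul, true_and, and_true, if_true]
          rw [hX]
          split_ifs <;> omega
        omega
  have he : 0 < x₃ (a, b, c) + 1 - x₁ (a, b, c) := by linarith
  by_cases hca : c ≤ a
  · refine ⟨⟨(a + 1, b, c - 1), by show a + 1 + b + (c - 1) = K; omega⟩, ?_, ?_⟩
    · rw [gTrans_int K p₁ p₂ p₃ x₁ x₂ x₃ _ _ hterm hc ha hb]
      simp only [gState_val_mk, if_true]
      rw [if_neg (by simp only [Prod.mk.injEq, not_and]; omega)]
      rw [if_neg (by simp only [Prod.mk.injEq, not_and]; omega)]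
      rw [if_neg (by simp only [Prod.mk.injEq, not_and]; omega)]
      rw [if_neg (by simp only [Prod.mk.injEq, not_and]; omega)]
      rw [if_neg (by simp only [Prod.mk.injEq, not_and]; omega)]
      apply div_pos (mul_pos he (by linarith)) (by norm_num)
    · have hprod : (a + 1) * b * (c - 1) < a * b * c := by
        obtain ⟨c', rfl⟩ : ∃ c', c = c' + 1 := ⟨c - 1, by omega⟩
        simp only [Nat.add_sub_cancel]
        calc (a + 1) * b * c' = a * b * c' + b * c' := by ring
          _ < a * b * c' + a * b := by
              have h1 : b * c' < b * a := Nat.mul_lt_mul_of_le_of_lt le_rfl (by omega) (by omega)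
              have h2 : b * a = a * b := Nat.mul_comm b a
              omega
          _ = a * b * (c' + 1) := by ring
      obtain ⟨X, hX⟩ : ∃ X, (a + 1) * b * (c - 1) * (K + 1) = X := ⟨_, rfl⟩
      obtain ⟨Y, hY⟩ : ∃ Y, a * b * c * (K + 1) = Y := ⟨_, rfl⟩
      have hXY : X < Y := by
        rw [← hX, ← hY]; exact Nat.mul_lt_mul_of_lt_of_le hprod le_rfl (by omega)
      have hmu_s : gmu K ⟨(a, b, c), hs⟩ = Y + K := by
        simp only [gmu, gState_val_mk]
        rw [if_neg hterm, if_neg hc, if_neg ha, if_neg hb, hY]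
      have hmu_t : gmu K ⟨(a + 1, b, c - 1), by show a + 1 + b + (c - 1) = K; omega⟩ ≤ X + K := by
        simp only [gmu, GState.terminal, gState_val_mk, mul_zero, zero_mul, true_and, and_true, if_true]
        rw [hX]
        split_ifs <;> omega
      omega
  · refine ⟨⟨(a - 1, b, c + 1), by show a - 1 + b + (c + 1) = K; omega⟩, ?_, ?_⟩
    · rw [gTrans_int K p₁ p₂ p₃ x₁ x₂ x₃ _ _ hterm hc ha hb]
      simp only [gState_val_mk, if_true]
      rw [if_neg (by simp only [Prod.mk.injEq, not_and]; omega)]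
      rw [if_neg (by simp only [Prod.mk.injEq, not_and]; omega)]
      rw [if_neg (by simp only [Prod.mk.injEq, not_and]; omega)]
      rw [if_neg (by simp only [Prod.mk.injEq, not_and]; omega)]
      apply div_pos (mul_pos he (by linarith)) (by norm_num)
    · have hprod : (a - 1) * b * (c + 1) < a * b * c := by
        obtain ⟨a', rfl⟩ : ∃ a', a = a' + 1 := ⟨a - 1, by omega⟩
        simp only [Nat.add_sub_cancel]
        calc a' * b * (c + 1) = a' * b * c + a' * b := by ring
          _ < a' * b * c + b * c := by
              have h1 : a' * b < c * b := Nat.mul_lt_mul_of_lt_of_le (by omega) le_rfl (by omega)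
              have h2 : c * b = b * c := Nat.mul_comm c b
              omega
          _ = (a' + 1) * b * c := by ring
      obtain ⟨X, hX⟩ : ∃ X, (a - 1) * b * (c + 1) * (K + 1) = X := ⟨_, rfl⟩
      obtain ⟨Y, hY⟩ : ∃ Y, a * b * c * (K + 1) = Y := ⟨_, rfl⟩
      have hXY : X < Y := by
        rw [← hX, ← hY]; exact Nat.mul_lt_mul_of_lt_of_le hprod le_rfl (by omega)
      have hmu_s : gmu K ⟨(a, b, c), hs⟩ = Y + K := by
        simp only [gmu, gState_val_mk]
        rw [if_neg hterm, if_neg hc, if_neg ha, if_neg hb, hY]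
      have hmu_t : gmu K ⟨(a - 1, b, c + 1), by show a - 1 + b + (c + 1) = K; omega⟩ ≤ X + K := by
        simp only [gmu, GState.terminal, gState_val_mk, mul_zero, zero_mul, true_and, and_true, if_true]
        rw [hX]
        split_ifs <;> omega
      omega

theorem absorbing_exists_limit {ι : Type*} [Fintype ι] [DecidableEq ι] [Nonempty ι]
    (M : Matrix ι ι ℝ) (P : ι → Prop) [DecidablePred P]
    (hnn : ∀ i j, 0 ≤ M i j) (hrow : ∀ i, ∑ j, M i j = 1)
    (habs : ∀ i, P i → ∀ j, M i j = if j = i then 1 else 0)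
    (hreach : ∀ s, ∃ t, 0 < ∑ τ ∈ Finset.univ.filter P, (M ^ t) s τ) :
    ∃ L, Tendsto (fun t : ℕ => M ^ t) atTop (𝓝 L) := by
  classical
  obtain ⟨i₀⟩ := ‹Nonempty ι›
  have hpnn : ∀ t i j, 0 ≤ (M ^ t) i j := fun t i j => pow_entry_nonneg M hnn t i j
  have hple : ∀ t i j, (M ^ t) i j ≤ 1 := fun t i j => pow_entry_le_one M hnn hrow t i j
  have habs' : ∀ i, P i → ∀ t j, (M ^ t) i j = if j = i then 1 else 0 :=
    fun i hi t j => pow_absorb M i (habs i hi) t j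
  have hpart : ∀ t s, (∑ τ ∈ Finset.univ.filter P, (M ^ t) s τ)
      + (∑ τ ∈ Finset.univ.filter (fun i => ¬ P i), (M ^ t) s τ) = 1 := by
    intro t s
    rw [Finset.sum_filter_add_sum_filter_not Finset.univ P]
    exact pow_row_sum M hrow t s
  have hmonoH : ∀ s, Monotone fun t => ∑ τ ∈ Finset.univ.filter P, (M ^ t) s τ := by
    intro s
    apply monotone_nat_of_le_succ
    intro t
    apply Finset.sum_le_sum
    intro τ hτ
    have hPτ : P τ := (Finset.mem_filter.1 hτ).2
    exact pow_absorb_mono M hnn τ (by rw [habs τ hPτ τ, if_pos rfl]) t s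
  have hrr0 : ∀ t s, 0 ≤ ∑ τ ∈ Finset.univ.filter (fun i => ¬ P i), (M ^ t) s τ :=
    fun t s => Finset.sum_nonneg fun τ _ => hpnn t s τ
  have hhh0 : ∀ t s, 0 ≤ ∑ τ ∈ Finset.univ.filter P, (M ^ t) s τ :=
    fun t s => Finset.sum_nonneg fun τ _ => hpnn t s τ
  have hanti : ∀ s, Antitone fun t =>
      ∑ τ ∈ Finset.univ.filter (fun i => ¬ P i), (M ^ t) s τ := by
    intro s t t' htt'
    have h1 := hmonoH s htt'
    have h2 := hpart t s
    have h3 := hpart t' s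
    simp only at h1 ⊢
    linarith
  have hrT : ∀ k, P k → ∀ m,
      (∑ τ ∈ Finset.univ.filter (fun i => ¬ P i), (M ^ m) k τ) = 0 := by
    intro k hk m
    apply Finset.sum_eq_zero
    intro τ hτ
    rw [habs' k hk m τ, if_neg]
    intro he
    exact (Finset.mem_filter.1 hτ).2 (he ▸ hk)
  choose tm htm using hreach
  set n : ℕ := (Finset.univ.sup tm) + 1 with hn
  have hn0 : 0 < n := Nat.succ_pos _
  set θ : ℝ := Finset.univ.sup' Finset.univ_nonempty
    (fun s => ∑ τ ∈ Finset.univ.filter (fun i => ¬ P i), (M ^ n) s τ) with hθ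
  have hθlt : θ < 1 := by
    rw [hθ, Finset.sup'_lt_iff]
    intro s _
    have h1 : 0 < ∑ τ ∈ Finset.univ.filter P, (M ^ (tm s)) s τ := htm s
    have h2 : (∑ τ ∈ Finset.univ.filter P, (M ^ (tm s)) s τ)
        ≤ ∑ τ ∈ Finset.univ.filter P, (M ^ n) s τ :=
      hmonoH s (le_trans (Finset.le_sup (Finset.mem_univ s)) (Nat.le_succ _))
    have h3 := hpart n s
    linarith
  have hθub : ∀ s, (∑ τ ∈ Finset.univ.filter (fun i => ¬ P i), (M ^ n) s τ) ≤ θ := by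
    intro s
    rw [hθ]
    exact Finset.le_sup'
      (fun s => ∑ τ ∈ Finset.univ.filter (fun i => ¬ P i), (M ^ n) s τ)
      (Finset.mem_univ s)
  have hθ0 : 0 ≤ θ := le_trans (hrr0 n i₀) (hθub i₀)
  have hsub : ∀ u s, (∑ τ ∈ Finset.univ.filter (fun i => ¬ P i), (M ^ (u + n)) s τ)
      ≤ (∑ τ ∈ Finset.univ.filter (fun i => ¬ P i), (M ^ u) s τ) * θ := by
    intro u s
    have expand : (∑ τ ∈ Finset.univ.filter (fun i => ¬ P i), (M ^ (u + n)) s τ)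
        = ∑ k, (M ^ u) s k *
            (∑ τ ∈ Finset.univ.filter (fun i => ¬ P i), (M ^ n) k τ) := by
      rw [pow_add]
      simp only [Matrix.mul_apply]
      rw [Finset.sum_comm]
      simp [Finset.mul_sum]
    rw [expand, ← Finset.sum_filter_add_sum_filter_not Finset.univ P
      (fun k => (M ^ u) s k * (∑ τ ∈ Finset.univ.filter (fun i => ¬ P i), (M ^ n) k τ))]
    have hz : (∑ k ∈ Finset.univ.filter P, (M ^ u) s k *
        (∑ τ ∈ Finset.univ.filter (fun i => ¬ P i), (M ^ n) k τ)) = 0 :=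
      Finset.sum_eq_zero fun k hk => by
        rw [hrT k (Finset.mem_filter.1 hk).2 n, mul_zero]
    rw [hz, zero_add, Finset.sum_mul]
    apply Finset.sum_le_sum
    intro k _
    exact mul_le_mul_of_nonneg_left (hθub k) (hpnn u s k)
  have hiter : ∀ j s,
      (∑ τ ∈ Finset.univ.filter (fun i => ¬ P i), (M ^ (j * n)) s τ) ≤ θ ^ j := by
    intro j
    induction j with
    | zero =>
        intro s
        simp only [Nat.zero_mul]
        rw [pow_zero θ]
        have h2 := hpart 0 s
        have h3 := hhh0 0 s
        linarith
    | succ j ihj =>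
        intro s
        have h1 : (j + 1) * n = j * n + n := by ring
        rw [h1]
        calc (∑ τ ∈ Finset.univ.filter (fun i => ¬ P i), (M ^ (j * n + n)) s τ)
            ≤ (∑ τ ∈ Finset.univ.filter (fun i => ¬ P i), (M ^ (j * n)) s τ) * θ :=
              hsub (j * n) s
          _ ≤ θ ^ j * θ := mul_le_mul_of_nonneg_right (ihj s) hθ0
          _ = θ ^ (j + 1) := (pow_succ θ j).symm
  have hbound : ∀ t s,
      (∑ τ ∈ Finset.univ.filter (fun i => ¬ P i), (M ^ t) s τ) ≤ θ ^ (t / n) := by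
    intro t s
    exact le_trans (hanti s (Nat.div_mul_le_self t n)) (hiter (t / n) s)
  have hentry : ∀ s s', ¬ P s' → ∀ t, (M ^ t) s s' ≤ θ ^ (t / n) := by
    intro s s' hs' t
    refine le_trans ?_ (hbound t s)
    exact Finset.single_le_sum (fun τ _ => hpnn t s τ)
      (Finset.mem_filter.2 ⟨Finset.mem_univ s', hs'⟩)
  have hdiv : Tendsto (fun t : ℕ => t / n) atTop atTop := by
    apply Filter.tendsto_atTop_atTop.2
    intro b
    exact ⟨b * n, fun t ht => (Nat.le_div_iff_mul_le hn0).2 ht⟩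
  have hto0 : Tendsto (fun t : ℕ => θ ^ (t / n)) atTop (𝓝 0) :=
    (tendsto_pow_atTop_nhds_zero_of_lt_one hθ0 hθlt).comp hdiv
  refine ⟨fun s s' => if P s' then ⨆ t, (M ^ t) s s' else 0, ?_⟩
  have key : ∀ s s', Tendsto (fun t => (M ^ t) s s') atTop
      (𝓝 (if P s' then ⨆ t, (M ^ t) s s' else 0)) := by
    intro s s'
    by_cases hPs' : P s'
    · rw [if_pos hPs']
      apply tendsto_atTop_ciSup
      · apply monotone_nat_of_le_succ
        intro t
        exact pow_absorb_mono M hnn s' (by rw [habs s' hPs' s', if_pos rfl]) t s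
      · exact ⟨1, fun x hx => by obtain ⟨t, rfl⟩ := hx; exact hple t s s'⟩
    · rw [if_neg hPs']
      exact squeeze_zero (fun t => hpnn t s s') (fun t => hentry s s' hPs' t) hto0
  exact tendsto_pi_nhds.2 fun s => tendsto_pi_nhds.2 fun s' => key s s'

lemma greach (K : ℕ) (p₁ p₂ p₃ : ℝ) (x₁ x₂ x₃ : ℕ × ℕ × ℕ → ℝ)
    (hp₁ : p₁ ∈ Set.Ioo (0:ℝ) 1) (hp₂ : p₂ ∈ Set.Ioo (0:ℝ) 1)
    (hp₃ : p₃ ∈ Set.Ioo (0:ℝ) 1)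
    (hx : ∀ s : ℕ × ℕ × ℕ, 0 < s.1 → 0 < s.2.1 → 0 < s.2.2 →
      x₁ s ∈ Set.Icc (0:ℝ) 1 ∧ x₂ s ∈ Set.Icc (0:ℝ) 1 ∧ x₃ s ∈ Set.Icc (0:ℝ) 1) :
    ∀ s : GState K, ∃ t : ℕ, 0 < ∑ k : GState K,
      ((gTrans K p₁ p₂ p₃ x₁ x₂ x₃) ^ t) s k *
        (if GState.terminal k then (1:ℝ) else 0) := by
  classical
  have hnn : ∀ i j, 0 ≤ gTrans K p₁ p₂ p₃ x₁ x₂ x₃ i j :=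
    fun i j => gTrans_nonneg K p₁ p₂ p₃ x₁ x₂ x₃ hp₁ hp₂ hp₃ hx i j
  have hf : ∀ k : GState K, 0 ≤ (if GState.terminal k then (1:ℝ) else 0) := by
    intro k; split_ifs <;> norm_num
  suffices H : ∀ n : ℕ, ∀ s : GState K, gmu K s ≤ n → ∃ t : ℕ, 0 < ∑ k : GState K,
      ((gTrans K p₁ p₂ p₃ x₁ x₂ x₃) ^ t) s k *
        (if GState.terminal k then (1:ℝ) else 0) by
    exact fun s => H (gmu K s) s le_rfl
  intro n
  induction n using Nat.strong_induction_on with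
  | _ n ih =>
    intro s hns
    by_cases hterm : s.terminal
    · refine ⟨0, ?_⟩
      rw [pow_zero]
      have h1 : ∀ k : GState K, (1 : Matrix (GState K) (GState K) ℝ) s k *
          (if GState.terminal k then (1:ℝ) else 0)
          = if s = k then (if GState.terminal k then (1:ℝ) else 0) else 0 := by
        intro k
        rw [Matrix.one_apply]
        split_ifs <;> ring
      rw [Finset.sum_congr rfl fun k _ => h1 k,
        Finset.sum_ite_eq Finset.univ s (fun k => if GState.terminal k then (1:ℝ) else 0),
        if_pos (Finset.mem_univ s), if_pos hterm]
      norm_num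
    · obtain ⟨s', hpos, hlt⟩ := gstep K p₁ p₂ p₃ x₁ x₂ x₃ hp₁ hp₂ hp₃ s hterm
      obtain ⟨t, ht⟩ := ih (gmu K s') (lt_of_lt_of_le hlt hns) s' le_rfl
      exact ⟨t + 1, step_pos (gTrans K p₁ p₂ p₃ x₁ x₂ x₃) hnn hpos hf ht⟩

/-- In the three-gambler ruin game with total capital `K ≥ 3`, `p₁,p₂,p₃ ∈ (0,1)` and any
stationary strategy profile with values in `[0,1]`, the powers of the transition matrix
converge entrywise to a limit. -/
theorem transition_power_limit_exists
    (K : ℕ) (hK : 3 ≤ K) (p₁ p₂ p₃ : ℝ)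
    (hp₁ : p₁ ∈ Set.Ioo (0 : ℝ) 1) (hp₂ : p₂ ∈ Set.Ioo (0 : ℝ) 1)
    (hp₃ : p₃ ∈ Set.Ioo (0 : ℝ) 1)
    (x₁ x₂ x₃ : ℕ × ℕ × ℕ → ℝ)
    (hx : ∀ s : ℕ × ℕ × ℕ, 0 < s.1 → 0 < s.2.1 → 0 < s.2.2 →
      x₁ s ∈ Set.Icc (0 : ℝ) 1 ∧ x₂ s ∈ Set.Icc (0 : ℝ) 1 ∧ x₃ s ∈ Set.Icc (0 : ℝ) 1) :
    ∃ L : Matrix (GState K) (GState K) ℝ,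
      Tendsto (fun t : ℕ => (gTrans K p₁ p₂ p₃ x₁ x₂ x₃) ^ t) atTop (𝓝 L) := by
  classical
  haveI hne : Nonempty (GState K) := ⟨⟨(K, 0, 0), by show K + 0 + 0 = K; omega⟩⟩
  apply absorbing_exists_limit (gTrans K p₁ p₂ p₃ x₁ x₂ x₃) GState.terminal
    (fun i j => gTrans_nonneg K p₁ p₂ p₃ x₁ x₂ x₃ hp₁ hp₂ hp₃ hx i j)
    (fun i => gTrans_row_sum K p₁ p₂ p₃ x₁ x₂ x₃ i)
    (fun i hi j => gTrans_term K p₁ p₂ p₃ x₁ x₂ x₃ i j hi)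
  intro s
  obtain ⟨t, ht⟩ := greach K p₁ p₂ p₃ x₁ x₂ x₃ hp₁ hp₂ hp₃ hx s
  refine ⟨t, ?_⟩
  rw [Finset.sum_filter]
  have h1 : ∀ k : GState K, (if GState.terminal k then
      ((gTrans K p₁ p₂ p₃ x₁ x₂ x₃) ^ t) s k else 0)
      = ((gTrans K p₁ p₂ p₃ x₁ x₂ x₃) ^ t) s k *
        (if GState.terminal k then (1:ℝ) else 0) := by
    intro k; split_ifs <;> ring
  rw [Finset.sum_congr rfl fun k _ => h1 k]
  exact ht
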